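/- Let ν and ν̃ be probability measures on (Fin d → ℝ), both concentrated on nonnegative vectors. If the Poisson compound of ν equals the Poisson compound of ν̃ as measures on (Fin d → ℕ), then ν = ν̃. -/

import Mathlib

/-!
Given `y`, the generating function `n ↦ ∏ j, t j ^ n j` of the compound integrates to
`∏ j, exp ((t j - 1) * y j)`, so equal compounds have equal Laplace transforms
`s ↦ ∫ exp (-∑ j, s j * y j) dν` on the cube `0 ≤ s ≤ 1`. Along a ray `u ↦ u • s` the Laplace
transform is the restriction of a function holomorphic on `re z > 0`, so it agrees on the whole
orthant. On `[0, ∞)^d` the functions `y ↦ exp (-∑ j, s j * y j)` are bounded, closed under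
products and separate points, so by Stone–Weierstrass they determine a finite measure.
-/

open MeasureTheory ProbabilityTheory

/-- Poisson compound of a measure `ν` on `Fin d → ℝ`: conditionally on `y ~ ν`, the
coordinates are independent Poisson variables with rates `y j`. -/
noncomputable def poissonCompound (d : ℕ) (ν : Measure (Fin d → ℝ)) : Measure (Fin d → ℕ) :=
  ν.bind (fun y => Measure.pi (fun j => (poissonPMF (Real.toNNReal (y j))).toMeasure))

open Filter
open scoped NNReal ENNReal Topology BoundedContinuousFunction

namespace ProbabilityTheory

variable {Ω Ω' : Type*} {mΩ : MeasurableSpace Ω} {mΩ' : MeasurableSpace Ω'}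
  {μ : Measure Ω} {μ' : Measure Ω'} {X : Ω → ℝ} {Y : Ω' → ℝ}

lemma Iio_subset_interior_integrableExpSet [IsFiniteMeasure μ] (hXm : AEMeasurable X μ)
    (hX : 0 ≤ᵐ[μ] X) : Set.Iio 0 ⊆ interior (integrableExpSet X μ) := by
  rw [← interior_Iic]
  refine interior_mono fun t ht ↦ (integrable_const (1 : ℝ)).mono' (by fun_prop) ?_
  filter_upwards [hX] with ω hω
  simpa using mul_nonpos_of_nonpos_of_nonneg (Set.mem_Iic.1 ht) hω

lemma analyticOnNhd_complexMGF_of_nonneg [IsFiniteMeasure μ] (hXm : AEMeasurable X μ)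
    (hX : 0 ≤ᵐ[μ] X) : AnalyticOnNhd ℂ (complexMGF X μ) {z | z.re < 0} :=
  analyticOnNhd_complexMGF.mono fun _ hz ↦ Iio_subset_interior_integrableExpSet hXm hX hz

lemma mgf_eq_of_eqOn_Ioo_of_nonneg [IsFiniteMeasure μ] [IsFiniteMeasure μ']
    (hXm : AEMeasurable X μ) (hYm : AEMeasurable Y μ') (hX : 0 ≤ᵐ[μ] X) (hY : 0 ≤ᵐ[μ'] Y)
    {a b : ℝ} (hab : a < b) (hb : b ≤ 0) (h : Set.EqOn (mgf X μ) (mgf Y μ') (Set.Ioo a b))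
    {t : ℝ} (ht : t < 0) : mgf X μ t = mgf Y μ' t := by
  have hc : (a + b) / 2 ∈ Set.Ioo a b := ⟨by linarith, by linarith⟩
  have hreal : ∃ᶠ s : ℝ in 𝓝[≠] ((a + b) / 2), complexMGF X μ s = complexMGF Y μ' s :=
    (eventually_nhdsWithin_of_eventually_nhds (isOpen_Ioo.mem_nhds hc)).frequently.mono
      fun s hs ↦ by rw [complexMGF_ofReal, complexMGF_ofReal, h hs]
  have hcomplex :
      ∃ᶠ z : ℂ in 𝓝[≠] (((a + b) / 2 : ℝ) : ℂ), complexMGF X μ z = complexMGF Y μ' z :=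
    (tendsto_nhdsWithin_of_tendsto_nhds_of_eventually_within _
      ((Complex.continuous_ofReal.tendsto _).mono_left nhdsWithin_le_nhds)
      (eventually_mem_nhdsWithin.mono fun _ hs ↦ Complex.ofReal_injective.ne hs)).frequently
      hreal
  have hEqOn := (analyticOnNhd_complexMGF_of_nonneg hXm hX).eqOn_of_preconnected_of_frequently_eq
    (analyticOnNhd_complexMGF_of_nonneg hYm hY) (convex_halfSpace_re_lt 0).isPreconnected
    (by simp; linarith) hcomplex
  simpa [complexMGF_ofReal] using hEqOn (show (t : ℂ).re < 0 by simpa)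

end ProbabilityTheory

namespace MeasureTheory

variable {ι : Type*} [Fintype ι]

section Pi

variable {Ω : ι → Type*} [∀ i, MeasurableSpace (Ω i)]

lemma lintegral_fintype_prod_eq_prod {μ : (i : ι) → Measure (Ω i)}
    [∀ i, IsProbabilityMeasure (μ i)] {f : (i : ι) → Ω i → ℝ≥0∞} (hf : ∀ i, Measurable (f i)) :
    ∫⁻ ω, ∏ i, f i (ω i) ∂Measure.pi μ = ∏ i, ∫⁻ x, f i x ∂μ i := by
  rw [lintegral_prod_eq_prod_lintegral_of_indepFun _ _
    (iIndepFun_pi fun i ↦ (hf i).aemeasurable) fun i ↦ (hf i).comp (measurable_pi_apply i)]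
  exact Finset.prod_congr rfl fun i _ ↦ (measurePreserving_eval μ i).lintegral_comp (hf i)

lemma measurable_measure_pi {α : ι → Type*} [∀ i, MeasurableSpace (α i)]
    {κ : (i : ι) → α i → Measure (Ω i)} [∀ i a, IsProbabilityMeasure (κ i a)]
    (hκ : ∀ i, Measurable (κ i)) :
    Measurable fun a : (i : ι) → α i ↦ Measure.pi fun i ↦ κ i (a i) := by
  refine .measure_of_isPiSystem_of_isProbabilityMeasure generateFrom_pi.symm isPiSystem_pi ?_
  rintro _ ⟨s, hs, rfl⟩
  simp_rw [Measure.pi_pi]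
  exact Finset.measurable_prod _ fun i _ ↦
    (Measure.measurable_coe (hs i trivial)).comp ((hκ i).comp (measurable_pi_apply i))

end Pi

section Laplace

noncomputable def laplaceChar (s : ι → ℝ≥0) : (ι → ℝ≥0) →ᵇ ℝ :=
  have hle (x : ι → ℝ≥0) : Real.exp (-(∑ i, s i * x i : ℝ≥0)) ≤ 1 :=
    Real.exp_le_one_iff.2 (neg_nonpos.2 (NNReal.coe_nonneg _))
  .mkOfBound ⟨fun x ↦ Real.exp (-(∑ i, s i * x i : ℝ≥0)), by fun_prop⟩ 1 fun x y ↦ by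
    rw [Real.dist_eq]
    exact abs_sub_le_of_nonneg_of_le (Real.exp_nonneg _) (hle x) (Real.exp_nonneg _) (hle y)

@[simp]
lemma laplaceChar_apply (s x : ι → ℝ≥0) :
    laplaceChar s x = Real.exp (-(∑ i, s i * x i : ℝ≥0)) := rfl

lemma laplaceChar_zero : laplaceChar (0 : ι → ℝ≥0) = 1 := by
  ext x; simp

lemma laplaceChar_add (s t : ι → ℝ≥0) : laplaceChar (s + t) = laplaceChar s * laplaceChar t := by
  ext x
  simp only [laplaceChar_apply, BoundedContinuousFunction.coe_mul, Pi.mul_apply, ← Real.exp_add,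
    Pi.add_apply, add_mul, Finset.sum_add_distrib, NNReal.coe_add, neg_add]

lemma star_range_laplaceChar :
    star (Set.range (laplaceChar (ι := ι))) = Set.range laplaceChar := by
  have hself (f : (ι → ℝ≥0) →ᵇ ℝ) : star f = f := by ext; simp
  ext f; simp [hself]

lemma separatesPoints_laplaceChar :
    ((StarAlgebra.adjoin ℝ (Set.range (laplaceChar (ι := ι)))).map
      (BoundedContinuousFunction.toContinuousMapStarₐ ℝ)).SeparatesPoints := by
  classical
  intro x y hxy
  obtain ⟨i, hi⟩ := Function.ne_iff.1 hxy
  refine ⟨_, ⟨_, ⟨laplaceChar (Pi.single i 1), StarAlgebra.subset_adjoin _ _ ⟨_, rfl⟩, rfl⟩, rfl⟩,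
    ?_⟩
  simpa [Pi.single_apply] using hi

variable {P P' : Measure (ι → ℝ≥0)} [IsFiniteMeasure P] [IsFiniteMeasure P']

lemma integral_eq_of_mem_adjoin_laplaceChar
    (h : ∀ s, ∫ x, laplaceChar s x ∂P = ∫ x, laplaceChar s x ∂P') {g : (ι → ℝ≥0) →ᵇ ℝ}
    (hg : g ∈ StarAlgebra.adjoin ℝ (Set.range (laplaceChar (ι := ι)))) :
    ∫ x, g x ∂P = ∫ x, g x ∂P' := by
  replace hg : g ∈ Subalgebra.toSubmodule
      (StarAlgebra.adjoin ℝ (Set.range laplaceChar)).toSubalgebra := hg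
  rw [StarAlgebra.adjoin_toSubalgebra, star_range_laplaceChar, Set.union_self,
    Algebra.adjoin_eq_span] at hg
  have hclosure : (Submonoid.closure (Set.range (laplaceChar (ι := ι))) :
      Set ((ι → ℝ≥0) →ᵇ ℝ)) ⊆ Set.range laplaceChar := by
    intro g hg
    induction hg using Submonoid.closure_induction with
    | mem g hg => exact hg
    | one => exact ⟨0, laplaceChar_zero⟩
    | mul f g _ _ hf hg =>
      obtain ⟨s, rfl⟩ := hf
      obtain ⟨t, rfl⟩ := hg
      exact ⟨s + t, laplaceChar_add s t⟩
  induction hg using Submodule.span_induction with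
  | mem g hg => obtain ⟨s, rfl⟩ := hclosure hg; exact h s
  | zero => simp
  | add f g _ _ hf hg =>
    simp only [BoundedContinuousFunction.coe_add, Pi.add_apply]
    rw [integral_add (f.integrable P) (g.integrable P),
      integral_add (f.integrable P') (g.integrable P'), hf, hg]
  | smul c f _ hf =>
    simp only [BoundedContinuousFunction.coe_smul, smul_eq_mul, integral_const_mul, hf]

theorem ext_of_integral_laplaceChar_eq
    (h : ∀ s, ∫ x, laplaceChar s x ∂P = ∫ x, laplaceChar s x ∂P') : P = P' :=
  ext_of_forall_mem_subalgebra_integral_eq_of_pseudoEMetric_complete_countable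
    separatesPoints_laplaceChar fun _ hg ↦ integral_eq_of_mem_adjoin_laplaceChar h hg

lemma integral_laplaceChar_eq_of_forall_le_one
    (h : ∀ s ≤ 1, ∫ x, laplaceChar s x ∂P = ∫ x, laplaceChar s x ∂P') (s : ι → ℝ≥0) :
    ∫ x, laplaceChar s x ∂P = ∫ x, laplaceChar s x ∂P' := by
  set X : (ι → ℝ≥0) → ℝ := fun x ↦ (∑ i, s i * x i : ℝ≥0)
  have hX : Measurable X := by fun_prop
  have hmgf (ρ : Measure (ι → ℝ≥0)) (u : ℝ≥0) :
      mgf X ρ (-u) = ∫ x, laplaceChar (u • s) x ∂ρ := by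
    simp only [mgf, laplaceChar_apply, X]
    congr with x
    simp [Finset.mul_sum, mul_assoc]
  have hc : (0 : ℝ) < 1 + ∑ i, (s i : ℝ) := by positivity
  have hEqOn : Set.EqOn (mgf X P) (mgf X P') (Set.Ioo (-(1 + ∑ i, (s i : ℝ))⁻¹) 0) := by
    rintro t ⟨ht, ht₀⟩
    obtain ⟨u, rfl⟩ : ∃ u : ℝ≥0, t = -u :=
      ⟨(-t).toNNReal, by rw [Real.coe_toNNReal _ (by linarith), neg_neg]⟩
    rw [hmgf, hmgf]
    refine h _ fun i ↦ ?_
    have hsi : (s i : ℝ) ≤ 1 + ∑ i, (s i : ℝ) :=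
      (Finset.single_le_sum (fun j _ ↦ (s j).coe_nonneg) (Finset.mem_univ i)).trans (by simp)
    rw [← NNReal.coe_le_coe]
    calc (u : ℝ) * s i ≤ (1 + ∑ i, (s i : ℝ))⁻¹ * (1 + ∑ i, (s i : ℝ)) :=
          mul_le_mul (by linarith) hsi (s i).coe_nonneg (by positivity)
      _ = 1 := inv_mul_cancel₀ hc.ne'
  have hX₀ (ρ : Measure (ι → ℝ≥0)) : 0 ≤ᵐ[ρ] X := ae_of_all _ fun _ ↦ NNReal.coe_nonneg _
  have hone (ρ : Measure (ι → ℝ≥0)) : mgf X ρ (-1) = ∫ x, laplaceChar s x ∂ρ := by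
    simpa using hmgf ρ 1
  rw [← hone, ← hone]
  exact mgf_eq_of_eqOn_Ioo_of_nonneg hX.aemeasurable hX.aemeasurable (hX₀ P) (hX₀ P')
    (neg_lt_zero.2 (inv_pos.2 hc)) le_rfl hEqOn neg_one_lt_zero

end Laplace

end MeasureTheory

namespace ProbabilityTheory

set_option linter.deprecated false in
lemma poissonPMF_toMeasure (r : ℝ≥0) : (poissonPMF r).toMeasure = poissonMeasure r := by
  refine Measure.ext_iff_singleton.2 fun n ↦ ?_
  rw [PMF.toMeasure_apply_singleton _ _ (measurableSet_singleton n), poissonMeasure_singleton]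
  rfl

lemma measurable_poissonMeasure : Measurable poissonMeasure := by
  refine Measure.measurable_of_measurable_coe _ fun s _ ↦ ?_
  simp_rw [poissonMeasure, Measure.sum_apply _ ‹_›, Measure.smul_apply, smul_eq_mul]
  exact .tsum fun n ↦ by fun_prop

lemma lintegral_pow_poissonMeasure (r t : ℝ≥0) :
    ∫⁻ n, (t : ℝ≥0∞) ^ n ∂poissonMeasure r = ENNReal.ofReal (Real.exp ((t - 1) * r)) := by
  have hsum : HasSum (fun n : ℕ ↦ Real.exp (-r) * ((t * r) ^ n / n.factorial))
      (Real.exp ((t - 1) * r)) := by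
    have h := (NormedSpace.expSeries_div_hasSum_exp (t * r : ℝ)).mul_left (Real.exp (-r))
    rwa [← Real.exp_eq_exp_ℝ, ← Real.exp_add, neg_add_eq_sub, ← sub_one_mul] at h
  rw [poissonMeasure, lintegral_sum_measure, ← hsum.tsum_eq,
    ENNReal.ofReal_tsum_of_nonneg (fun n ↦ by positivity) hsum.summable]
  refine tsum_congr fun n ↦ ?_
  rw [lintegral_smul_measure, lintegral_dirac, smul_eq_mul, ← ENNReal.ofReal_coe_nnreal,
    ← ENNReal.ofReal_pow t.coe_nonneg, ← ENNReal.ofReal_mul (by positivity)]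
  ring_nf

variable {ι : Type*} [Fintype ι]

noncomputable def piPoissonMeasure (x : ι → ℝ≥0) : Measure (ι → ℕ) :=
  Measure.pi fun i ↦ poissonMeasure (x i)

lemma measurable_piPoissonMeasure : Measurable (piPoissonMeasure (ι := ι)) :=
  measurable_measure_pi fun _ ↦ measurable_poissonMeasure

lemma lintegral_prod_pow_piPoissonMeasure (x t : ι → ℝ≥0) :
    ∫⁻ n, ∏ i, (t i : ℝ≥0∞) ^ n i ∂piPoissonMeasure x =
      ENNReal.ofReal (Real.exp (∑ i, (t i - 1 : ℝ) * x i)) := by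
  rw [piPoissonMeasure, lintegral_fintype_prod_eq_prod fun _ ↦ by fun_prop, Real.exp_sum,
    ENNReal.ofReal_prod_of_nonneg fun _ _ ↦ (Real.exp_pos _).le]
  exact Finset.prod_congr rfl fun i _ ↦ lintegral_pow_poissonMeasure _ _

lemma lintegral_prod_pow_bind_piPoissonMeasure (ρ : Measure (ι → ℝ≥0)) (t : ι → ℝ≥0) :
    ∫⁻ n, ∏ i, (t i : ℝ≥0∞) ^ n i ∂ρ.bind piPoissonMeasure =
      ∫⁻ x, ENNReal.ofReal (Real.exp (∑ i, (t i - 1 : ℝ) * x i)) ∂ρ := by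
  rw [Measure.lintegral_bind measurable_piPoissonMeasure.aemeasurable
    Measurable.of_discrete.aemeasurable]
  exact lintegral_congr fun x ↦ lintegral_prod_pow_piPoissonMeasure x t

lemma integral_laplaceChar_eq_of_bind_piPoissonMeasure_eq {ρ ρ' : Measure (ι → ℝ≥0)}
    (h : ρ.bind piPoissonMeasure = ρ'.bind piPoissonMeasure) {s : ι → ℝ≥0} (hs : s ≤ 1) :
    ∫ x, laplaceChar s x ∂ρ = ∫ x, laplaceChar s x ∂ρ' := by
  have hsub (i : ι) : ((1 - s i : ℝ≥0) : ℝ) - 1 = -s i := by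
    rw [NNReal.coe_sub (show s i ≤ 1 from hs i), NNReal.coe_one]; ring
  have hpgf (μ : Measure (ι → ℝ≥0)) : ∫ x, laplaceChar s x ∂μ =
      (∫⁻ n, ∏ i, ((1 - s i : ℝ≥0) : ℝ≥0∞) ^ n i ∂μ.bind piPoissonMeasure).toReal := by
    rw [lintegral_prod_pow_bind_piPoissonMeasure,
      integral_eq_lintegral_of_nonneg_ae (f := laplaceChar s)
        (ae_of_all _ fun _ ↦ (Real.exp_pos _).le) (laplaceChar s).continuous.aestronglyMeasurable]
    congr with x
    simp [hsub, Finset.sum_neg_distrib]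
  rw [hpgf, hpgf, h]

end ProbabilityTheory

lemma MeasureTheory.Measure.eq_of_map_toNNReal_eq {ι : Type*} {ν ν' : Measure (ι → ℝ)}
    (hν : ∀ᵐ y ∂ν, ∀ i, 0 ≤ y i) (hν' : ∀ᵐ y ∂ν', ∀ i, 0 ≤ y i)
    (h : ν.map (fun y i ↦ (y i).toNNReal) = ν'.map (fun y i ↦ (y i).toNNReal)) : ν = ν' := by
  have hmap {μ : Measure (ι → ℝ)} (hμ : ∀ᵐ y ∂μ, ∀ i, 0 ≤ y i) :
      (μ.map fun y i ↦ (y i).toNNReal).map (fun x i ↦ (x i : ℝ)) = μ := by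
    rw [Measure.map_map (by fun_prop) (by fun_prop)]
    conv_rhs => rw [← Measure.map_id (μ := μ)]
    refine Measure.map_congr (hμ.mono fun y hy ↦ ?_)
    funext i
    exact Real.coe_toNNReal _ (hy i)
  rw [← hmap hν, ← hmap hν', h]

lemma poissonCompound_eq_bind_map (d : ℕ) (ν : Measure (Fin d → ℝ)) :
    poissonCompound d ν = (ν.map fun y i ↦ (y i).toNNReal).bind piPoissonMeasure := by
  simp_rw [poissonCompound, poissonPMF_toMeasure, Measure.bind]
  rw [Measure.map_map measurable_piPoissonMeasure (by fun_prop)]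
  rfl

/-- Identifiability of the mixing distribution through Poisson observational noise:
equality of Poisson compounds implies equality of the mixing measures. -/
theorem poissonCompound_injective
    (d : ℕ) (ν ν' : Measure (Fin d → ℝ))
    [IsProbabilityMeasure ν] [IsProbabilityMeasure ν']
    (hν : ∀ᵐ y ∂ν, ∀ j, 0 ≤ y j) (hν' : ∀ᵐ y ∂ν', ∀ j, 0 ≤ y j)
    (h : poissonCompound d ν = poissonCompound d ν') :
    ν = ν' := by
  have hT : Measurable fun (y : Fin d → ℝ) i ↦ (y i).toNNReal := by fun_prop
  have := Measure.isProbabilityMeasure_map (μ := ν) hT.aemeasurable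
  have := Measure.isProbabilityMeasure_map (μ := ν') hT.aemeasurable
  rw [poissonCompound_eq_bind_map, poissonCompound_eq_bind_map] at h
  exact Measure.eq_of_map_toNNReal_eq hν hν' <| ext_of_integral_laplaceChar_eq <|
    integral_laplaceChar_eq_of_forall_le_one fun _ hs ↦
      integral_laplaceChar_eq_of_bind_piPoissonMeasure_eq h hs
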